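/- Let 1 < p, q < ∞ with 1/p + 1/q = 1. A linear functional f on bv_p is continuous if and only if there exists a = (a_k)_{k≥1} ∈ l_q such that f(x) = ∑_{k=1}^∞ a_k (x_k − x_{k−1}) for all x ∈ bv_p (with x_0 = 0). -/

import Mathlib

/-!
The difference operator `Δ` maps `bv_p` isometrically onto `ℓ^p`, so the question is the duality
`(ℓ^p)' = ℓ^q`. If `a ∈ ℓ^q`, Hölder's inequality bounds `y ↦ ∑ a_k y_k` by `‖a‖_q`.
Conversely, since `p < ∞` the unit vectors `e_k` form a Schauder basis of `ℓ^p`, so a continuous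
`F` is represented by `a_k = F e_k`; evaluating `F` on the truncations of
`(|a_k|^(q-2) conj a_k)`, where Hölder's inequality is an equality, gives `‖a‖_q ≤ ‖F‖`.
-/

noncomputable section

open Filter Topology
open scoped ENNReal

/-- The difference operator: sequences indexed from `0`, representing `(x_k)_{k ≥ 1}`
(so index `n : ℕ` stands for `x_{n+1}`), with the convention `x_0 = 0`. -/
def delta (x : ℕ → ℂ) : ℕ → ℂ := fun n => x n - if n = 0 then 0 else x (n - 1)

/-- The difference operator as a linear equivalence of the space of all sequences,
with inverse given by partial sums. -/
def deltaL : (ℕ → ℂ) ≃ₗ[ℂ] (ℕ → ℂ) where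
  toFun := delta
  invFun y := fun n => ∑ i ∈ Finset.range (n + 1), y i
  map_add' x y := by
    funext n
    simp only [delta, Pi.add_apply]
    split <;> ring
  map_smul' c x := by
    funext n
    simp only [delta, Pi.smul_apply, smul_eq_mul, RingHom.id_apply]
    split <;> ring
  left_inv x := by
    funext n
    induction n with
    | zero => simp [delta]
    | succ k ih =>
      show (∑ i ∈ Finset.range (k + 1 + 1), delta x i) = x (k + 1)
      rw [Finset.sum_range_succ]
      have ih' : (∑ i ∈ Finset.range (k + 1), delta x i) = x k := ih
      rw [ih']
      simp [delta]
  right_inv y := by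
    funext n
    show delta (fun n => ∑ i ∈ Finset.range (n + 1), y i) n = y n
    cases n with
    | zero => simp [delta]
    | succ k => simp [delta, Finset.sum_range_succ]

/-- The space `bv_p`, as a submodule of the space of all complex sequences:
`x ∈ bv_p` iff `Δx ∈ ℓ^p`. -/
def bvSubmodule (p : ℝ≥0∞) : Submodule ℂ (ℕ → ℂ) where
  carrier := {x | Memℓp (delta x) p}
  add_mem' {x y} hx hy := by
    have : delta (x + y) = delta x + delta y := map_add deltaL x y
    simpa [Set.mem_setOf_eq, this] using hx.add hy
  zero_mem' := by
    have : delta (0 : ℕ → ℂ) = 0 := map_zero deltaL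
    simp [Set.mem_setOf_eq, this]
    exact zero_memℓp
  smul_mem' c x hx := by
    have : delta (c • x) = c • delta x := map_smul deltaL c x
    simpa [Set.mem_setOf_eq, this] using hx.const_smul c

/-- The space `bv_p` as a type.  (A `def`, not an `abbrev`, so that it does not pick up
the product topology of the ambient sequence space.) -/
def bv (p : ℝ≥0∞) : Type := ↥(bvSubmodule p)

namespace bv

instance (p : ℝ≥0∞) : AddCommGroup (bv p) :=
  inferInstanceAs (AddCommGroup ↥(bvSubmodule p))

instance (p : ℝ≥0∞) : Module ℂ (bv p) :=
  inferInstanceAs (Module ℂ ↥(bvSubmodule p))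

/-- The underlying sequence of an element of `bv_p`. -/
def seq {p : ℝ≥0∞} (x : bv p) : ℕ → ℂ := Subtype.val (x : ↥(bvSubmodule p))

lemma memℓp_delta {p : ℝ≥0∞} (x : bv p) : Memℓp (delta (seq x)) p :=
  (x : ↥(bvSubmodule p)).2

/-- The difference operator, as a linear map from `bv_p` to `ℓ^p`. -/
def toLp (p : ℝ≥0∞) : bv p →ₗ[ℂ] lp (fun _ : ℕ => ℂ) p where
  toFun x := ⟨delta (seq x), memℓp_delta x⟩
  map_add' x y := by
    ext n
    have : delta (seq x + seq y) = delta (seq x) + delta (seq y) := map_add deltaL _ _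
    change delta (seq (x + y)) n = _
    have hseq : seq (x + y) = seq x + seq y := rfl
    rw [hseq, this]
    rfl
  map_smul' c x := by
    ext n
    have : delta (c • seq x) = c • delta (seq x) := map_smul deltaL c _
    change delta (seq (c • x)) n = _
    have hseq : seq (c • x) = c • seq x := rfl
    rw [hseq, this]
    rfl

lemma toLp_injective (p : ℝ≥0∞) : Function.Injective (toLp p) := by
  intro x y h
  have h' : delta (seq x) = delta (seq y) := by
    have := congrArg (Subtype.val) h
    exact this
  have : seq x = seq y := deltaL.injective h'
  exact Subtype.ext this

noncomputable instance (p : ℝ≥0∞) [Fact (1 ≤ p)] : NormedAddCommGroup (bv p) :=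
  NormedAddCommGroup.induced (bv p) (lp (fun _ : ℕ => ℂ) p) (toLp p) (toLp_injective p)

noncomputable instance (p : ℝ≥0∞) [Fact (1 ≤ p)] : NormedSpace ℂ (bv p) :=
  NormedSpace.induced ℂ (bv p) (lp (fun _ : ℕ => ℂ) p) (toLp p)

end bv

/-- The sequence `b^{(k+1)}`: `1` from position `k` on (positions indexed from `0`). -/
def bSeq (k : ℕ) : ℕ → ℂ := fun n => if k ≤ n then 1 else 0

/-- The sequence `e^{(k+1)}`: `1` exactly at position `k`. -/
def eSeq (k : ℕ) : ℕ → ℂ := fun n => if n = k then 1 else 0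

lemma memℓp_eSeq (p : ℝ≥0∞) [Fact (1 ≤ p)] (k : ℕ) : Memℓp (eSeq k) p := by
  rcases eq_or_ne p ∞ with rfl | hp
  · apply memℓp_infty
    apply Set.Finite.bddAbove
    apply Set.Finite.subset (Set.finite_singleton (0:ℝ) |>.insert 1)
    rintro r ⟨n, rfl⟩
    simp only [eSeq]
    split <;> simp
  · apply memℓp_gen
    apply summable_of_ne_finset_zero (s := {k})
    intro n hn
    simp only [Finset.mem_singleton] at hn
    simp only [eSeq, if_neg hn, norm_zero]
    have hp0 : 0 < p.toReal := by
      have h1 : (1 : ℝ≥0∞) ≤ p := Fact.out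
      exact ENNReal.toReal_pos (by intro h; rw [h] at h1; simp at h1) hp
    exact Real.zero_rpow hp0.ne'

lemma delta_bSeq (k : ℕ) : delta (bSeq k) = eSeq k := by
  funext n
  rcases n with _ | m <;>
    simp only [delta, bSeq, eSeq, Nat.add_sub_cancel, Nat.succ_ne_zero, if_false, reduceIte,
      sub_zero] <;>
    split_ifs <;> first | omega | (exfalso; omega) | (norm_num; done) | tauto

lemma delta_eSeq (k : ℕ) : delta (eSeq k) = eSeq k - eSeq (k + 1) := by
  funext n
  rcases n with _ | m <;>
    simp only [delta, eSeq, Pi.sub_apply, Nat.add_sub_cancel, Nat.succ_ne_zero, if_false,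
      reduceIte, sub_zero] <;>
    split_ifs <;> first | omega | (exfalso; omega) | (norm_num; done) | tauto

/-- The element `b^{(k+1)}` of `bv_p`. -/
def bvB (p : ℝ≥0∞) [Fact (1 ≤ p)] (k : ℕ) : bv p :=
  ⟨bSeq k, show Memℓp (delta (bSeq k)) p by rw [delta_bSeq]; exact memℓp_eSeq p k⟩

/-- The element `e^{(k+1)}` of `bv_p`. -/
def bvE (p : ℝ≥0∞) [Fact (1 ≤ p)] (k : ℕ) : bv p :=
  ⟨eSeq k, show Memℓp (delta (eSeq k)) p by
    rw [delta_eSeq]; exact (memℓp_eSeq p k).sub (memℓp_eSeq p (k + 1))⟩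

open ComplexConjugate

namespace Real.HolderConjugate

variable {p q : ℝ}

theorem rpow_le_rpow_of_rpow_le_mul (hpq : p.HolderConjugate q) {N C : ℝ} (hN : 0 ≤ N)
    (hC : 0 ≤ C) (h : N ^ p ≤ C * N) : N ^ p ≤ C ^ q := by
  rcases hN.eq_or_lt with rfl | hN
  · rw [Real.zero_rpow hpq.ne_zero]
    exact Real.rpow_nonneg hC q
  have hle : N ^ (p - 1) ≤ C := by
    rwa [Real.rpow_sub_one hN.ne', div_le_iff₀ hN]
  calc N ^ p = (N ^ (p - 1)) ^ q := by rw [← Real.rpow_mul hN.le, hpq.sub_one_mul_conj]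
    _ ≤ C ^ q := Real.rpow_le_rpow (by positivity) hle hpq.symm.nonneg

end Real.HolderConjugate

namespace RCLike

variable {𝕜 : Type*} [RCLike 𝕜]

theorem norm_rpow_sub_two_mul_conj {q : ℝ} (hq : q ≠ 1) (z : 𝕜) :
    ‖((‖z‖ ^ (q - 2) : ℝ) : 𝕜) * conj z‖ = ‖z‖ ^ (q - 1) := by
  rcases eq_or_ne z 0 with rfl | hz
  · simp [Real.zero_rpow (sub_ne_zero.2 hq)]
  rw [norm_mul, norm_conj, norm_ofReal, abs_of_nonneg (by positivity),
    ← Real.rpow_add_one (norm_ne_zero_iff.2 hz)]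
  ring_nf

theorem rpow_sub_two_mul_conj_mul_self {q : ℝ} (hq : q ≠ 0) (z : 𝕜) :
    ((‖z‖ ^ (q - 2) : ℝ) : 𝕜) * conj z * z = ((‖z‖ ^ q : ℝ) : 𝕜) := by
  rcases eq_or_ne z 0 with rfl | hz
  · simp [Real.zero_rpow hq]
  rw [mul_assoc, conj_mul, ← ofReal_pow, ← ofReal_mul, ← Real.rpow_natCast,
    ← Real.rpow_add (norm_pos_iff.2 hz)]
  norm_num

end RCLike

namespace lp

variable {𝕜 : Type*} {α : Type*} {p q : ℝ≥0∞}

section NormedField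

variable [NormedField 𝕜]

theorem single_eq_smul_single_one [DecidableEq α] (i : α) (c : 𝕜) :
    lp.single p i c = c • lp.single (E := fun _ : α => 𝕜) p i 1 := by
  rw [← lp.single_smul, smul_eq_mul, mul_one]

theorem apply_single_eq_mul [DecidableEq α] [Fact (1 ≤ p)]
    (F : lp (fun _ : α => 𝕜) p →L[𝕜] 𝕜) (i : α) (c : 𝕜) :
    F (lp.single p i c) = c * F (lp.single p i 1) := by
  rw [single_eq_smul_single_one, map_smul, smul_eq_mul]

theorem hasSum_apply_single_one_mul [DecidableEq α] [Fact (1 ≤ p)] (hp : p ≠ ⊤)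
    (F : lp (fun _ : α => 𝕜) p →L[𝕜] 𝕜) (y : lp (fun _ : α => 𝕜) p) :
    HasSum (fun k => F (lp.single p k 1) * y k) (F y) := by
  convert (lp.hasSum_single hp y).mapL F using 2 with k
  rw [apply_single_eq_mul F k (y k), mul_comm]

theorem norm_le_of_hasSum_mul (hpq : p.toReal.HolderConjugate q.toReal)
    (a : lp (fun _ : α => 𝕜) q) (y : lp (fun _ : α => 𝕜) p) {s : 𝕜}
    (hs : HasSum (fun k => a k * y k) s) : ‖s‖ ≤ ‖a‖ * ‖y‖ :=
  calc ‖s‖ ≤ ∑' k, ‖a k‖ * ‖y k‖ :=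
        hs.norm_le_of_bounded (lp.summable_mul hpq.symm a y).hasSum fun _ => norm_mul_le _ _
    _ ≤ ‖a‖ * ‖y‖ := lp.tsum_mul_le_mul_norm' hpq.symm a y

end NormedField

variable [RCLike 𝕜]

theorem sum_norm_rpow_apply_single_one_le [DecidableEq α] [Fact (1 ≤ p)]
    (hpq : p.toReal.HolderConjugate q.toReal) (F : lp (fun _ : α => 𝕜) p →L[𝕜] 𝕜)
    (s : Finset α) : ∑ k ∈ s, ‖F (lp.single p k 1)‖ ^ q.toReal ≤ ‖F‖ ^ q.toReal := by
  set a := fun k => F (lp.single p k 1)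
  set S := ∑ k ∈ s, ‖a k‖ ^ q.toReal
  -- Hölder's inequality `‖∑ a k * y k‖ ≤ ‖a‖_q ‖y‖_p` is an equality at `y = c` (on `s`).
  let c := fun k => ((‖a k‖ ^ (q.toReal - 2) : ℝ) : 𝕜) * conj (a k)
  let y := ∑ k ∈ s, lp.single p k (c k)
  have hFy : F y = S := by
    simp only [y, S, map_sum]
    refine Finset.sum_congr rfl fun k _ => ?_
    rw [apply_single_eq_mul F k (c k)]
    exact RCLike.rpow_sub_two_mul_conj_mul_self hpq.symm.ne_zero (a k)
  have hy : ‖y‖ ^ p.toReal = S := by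
    rw [lp.norm_sum_single hpq.pos]
    refine Finset.sum_congr rfl fun k _ => ?_
    rw [RCLike.norm_rpow_sub_two_mul_conj hpq.symm.lt.ne', ← Real.rpow_mul (norm_nonneg _),
      hpq.symm.sub_one_mul_conj]
  have hS : 0 ≤ S := Finset.sum_nonneg fun _ _ => by positivity
  rw [← hy]
  refine hpq.rpow_le_rpow_of_rpow_le_mul (norm_nonneg y) (norm_nonneg F) ?_
  calc ‖y‖ ^ p.toReal = ‖F y‖ := by rw [hy, hFy, RCLike.norm_ofReal, abs_of_nonneg hS]
    _ ≤ ‖F‖ * ‖y‖ := F.le_opNorm y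

theorem memℓp_apply_single_one [DecidableEq α] [Fact (1 ≤ p)]
    (hpq : p.toReal.HolderConjugate q.toReal) (F : lp (fun _ : α => 𝕜) p →L[𝕜] 𝕜) :
    Memℓp (fun k => F (lp.single p k 1)) q :=
  memℓp_gen' (sum_norm_rpow_apply_single_one_le hpq F)

theorem continuous_iff_exists_hasSum_mul [Fact (1 ≤ p)]
    (hpq : p.toReal.HolderConjugate q.toReal) (L : lp (fun _ : α => 𝕜) p →ₗ[𝕜] 𝕜) :
    Continuous L ↔ ∃ a : α → 𝕜, Memℓp a q ∧ ∀ y, HasSum (fun k => a k * y k) (L y) := by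
  classical
  constructor
  · intro hL
    let F : lp (fun _ : α => 𝕜) p →L[𝕜] 𝕜 := ⟨L, hL⟩
    exact ⟨fun k => F (lp.single p k 1), memℓp_apply_single_one hpq F,
      hasSum_apply_single_one_mul ((ENNReal.toReal_pos_iff_ne_top p).1 hpq.pos) F⟩
  · rintro ⟨a, ha, hL⟩
    exact AddMonoidHomClass.continuous_of_bound L ‖(⟨a, ha⟩ : lp (fun _ : α => 𝕜) q)‖
      fun y => norm_le_of_hasSum_mul hpq ⟨a, ha⟩ y (hL y)

end lp

namespace bv

theorem toLp_surjective (p : ℝ≥0∞) : Function.Surjective (toLp p) := by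
  intro y
  have hdelta : delta (deltaL.symm y) = y := deltaL.apply_symm_apply y
  exact ⟨⟨deltaL.symm y, show Memℓp (delta (deltaL.symm y)) p by rw [hdelta]; exact lp.memℓp y⟩,
    Subtype.ext hdelta⟩

def isoLp (p : ℝ≥0∞) [Fact (1 ≤ p)] : bv p ≃ₗᵢ[ℂ] lp (fun _ : ℕ => ℂ) p :=
  { LinearEquiv.ofBijective (toLp p) ⟨toLp_injective p, toLp_surjective p⟩ with
    norm_map' := fun _ => rfl }

@[simp]
theorem isoLp_apply (p : ℝ≥0∞) [Fact (1 ≤ p)] (x : bv p) (k : ℕ) :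
    isoLp p x k = delta (seq x) k :=
  rfl

end bv

theorem bvp_continuous_iff_repr_general (p q : ℝ) (hp : 1 < p)
    (hpq : 1 / p + 1 / q = 1) [Fact (1 ≤ ENNReal.ofReal p)]
    (f : bv (ENNReal.ofReal p) →ₗ[ℂ] ℂ) :
    Continuous f ↔
      ∃ a : ℕ → ℂ, (Summable fun k => ‖a k‖ ^ q) ∧
        ∀ x : bv (ENNReal.ofReal p), HasSum (fun k => a k * delta (bv.seq x) k) (f x) := by
  have hconj : p.HolderConjugate q := Real.holderConjugate_iff.2 ⟨hp, by simpa using hpq⟩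
  have hPQ : (ENNReal.ofReal p).toReal.HolderConjugate (ENNReal.ofReal q).toReal := by
    rwa [ENNReal.toReal_ofReal hconj.nonneg, ENNReal.toReal_ofReal hconj.symm.nonneg]
  let e := bv.isoLp (ENNReal.ofReal p)
  have hcont : Continuous f ↔ Continuous (f ∘ₗ e.symm.toLinearEquiv.toLinearMap) :=
    e.symm.toHomeomorph.comp_continuous_iff'.symm
  rw [hcont, lp.continuous_iff_exists_hasSum_mul hPQ]
  refine exists_congr fun a => and_congr ?_ (e.surjective.forall.trans ?_)
  · rw [memℓp_gen_iff hPQ.symm.pos, ENNReal.toReal_ofReal hconj.symm.nonneg]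
  · simp [e]

/-- For conjugate exponents `1 < p, q < ∞`, a linear functional `f` on
`bv_p` is continuous iff there is `a ∈ l_q` with `f x = ∑_{k=1}^∞ a_k (x_k - x_{k-1})`
for all `x ∈ bv_p`. -/
theorem bvp_continuous_iff_repr (p q : ℝ) (hp : 1 < p) (hq : 1 < q)
    (hpq : 1 / p + 1 / q = 1) [Fact (1 ≤ ENNReal.ofReal p)]
    (f : bv (ENNReal.ofReal p) →ₗ[ℂ] ℂ) :
    Continuous f ↔
      ∃ a : ℕ → ℂ, (Summable fun k => ‖a k‖ ^ q) ∧
        ∀ x : bv (ENNReal.ofReal p), HasSum (fun k => a k * delta (bv.seq x) k) (f x) :=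
  bvp_continuous_iff_repr_general p q hp hpq f
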